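/- Let M1, M2 be integers with 4 ≤ M1 ≤ M2. Then the average effective resistance of the two-dimensional toroidal grid satisfies R_ave(T_{M1,M2}) ≥ (1/12)·(M2/M1) − 1/24. -/

import Mathlib

open Real Finset

/-- Average effective resistance of the two-dimensional toroidal grid `T_{M1,M2}`. -/
noncomputable def Rave2 (M1 M2 : ℕ) : ℝ :=
  (1 / ((M1 : ℝ) * M2)) * ∑ i ∈ Finset.range M1, ∑ j ∈ Finset.range M2,
    if i = 0 ∧ j = 0 then 0
    else 1 / (4 - 2 * Real.cos (2 * Real.pi * i / M1) - 2 * Real.cos (2 * Real.pi * j / M2))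

/-! The row `i = 0` of the double sum is the cycle sum `∑_{j=1}^{M2-1} 1 / (2 - 2 cos (2πj/M2))`
(whose exact value is `(M2² - 1)/12`) and all other terms are nonnegative, so it suffices to bound
that sum below by `M2²/12 - M2/6`. Pairing `j` with `M2 - j` and using
`2 - 2 cos 2x = 4 sin² x ≤ 4x²` bounds it below by `M2²/(2π²) · ∑_{1 ≤ j < m} 1/j²` with
`2m ≤ M2 + 1`; the Basel sum `∑ 1/j² = π²/6` and the tail estimate `∑_{j ≥ m} 1/j² ≤ 2/(2m - 1)`
then give the constant `1/12`. -/

theorem sum_Ico_one_div_sq_le {m N : ℕ} (hm : 1 ≤ m) (hmN : m ≤ N) :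
    ∑ j ∈ Ico m N, (1 : ℝ) / (j : ℝ) ^ 2 ≤ 2 / (2 * m - 1) - 2 / (2 * N - 1) := by
  induction N, hmN using Nat.le_induction with
  | base => simp
  | succ N hmN ih =>
    have hN : (1 : ℝ) ≤ N := by exact_mod_cast hm.trans hmN
    -- `1/N² ≤ 4/(4N² - 1) = 2/(2N - 1) - 2/(2N + 1)`
    have step : (1 : ℝ) / (N : ℝ) ^ 2 ≤ 2 / (2 * N - 1) - 2 / (2 * (N + 1 : ℕ) - 1) := by
      push_cast
      rw [div_sub_div _ _ (by linarith) (by linarith), div_le_div_iff₀ (by positivity) (by nlinarith)]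
      nlinarith
    rw [sum_Ico_succ_top hmN]
    linarith

theorem pi_sq_div_six_le_sum_Ico_one_div_sq_add {m : ℕ} (hm : 1 ≤ m) :
    π ^ 2 / 6 ≤ ∑ j ∈ Ico 1 m, (1 : ℝ) / (j : ℝ) ^ 2 + 2 / (2 * m - 1) := by
  refine le_of_tendsto hasSum_zeta_two.tendsto_sum_nat ?_
  filter_upwards [Filter.eventually_ge_atTop m] with N hmN
  have hN : (1 : ℝ) ≤ N := by exact_mod_cast hm.trans hmN
  rw [← sum_range_add_sum_Ico _ hmN, sum_range_eq_add_Ico _ hm, Nat.cast_zero, zero_pow two_ne_zero,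
    div_zero, zero_add]
  have := sum_Ico_one_div_sq_le hm hmN
  have : (0 : ℝ) ≤ 2 / (2 * N - 1) := div_nonneg zero_le_two (by linarith)
  linarith

theorem sum_Ico_add_reflect_le_sum_Ico {M : Type*} [AddCommMonoid M] [PartialOrder M]
    [IsOrderedAddMonoid M] {f : ℕ → M} (hf : ∀ j, 0 ≤ f j) {m n : ℕ} (hm : 2 * m ≤ n + 1) :
    ∑ j ∈ Ico 1 m, (f j + f (n - j)) ≤ ∑ j ∈ Ico 1 n, f j := by
  have hreflect : ∑ j ∈ Ico 1 m, f (n - j) = ∑ j ∈ Ico (n + 1 - m) n, f j := by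
    rw [sum_Ico_reflect f 1 (by omega)]
    rfl
  have hdisj : Disjoint (Ico 1 m) (Ico (n + 1 - m) n) :=
    Finset.disjoint_left.2 fun j hj hj' => by simp only [mem_Ico] at hj hj'; omega
  rw [sum_add_distrib, hreflect, ← sum_union hdisj]
  refine sum_le_sum_of_subset_of_nonneg (fun j hj => ?_) fun j _ _ => hf j
  simp only [mem_union, mem_Ico] at hj ⊢
  omega

theorem one_div_four_mul_sq_le_one_div_two_sub_two_cos_two_mul {x : ℝ} (hx0 : 0 < x)
    (hxπ : x < π) : 1 / (4 * x ^ 2) ≤ 1 / (2 - 2 * cos (2 * x)) := by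
  have hsin : 0 < sin x := sin_pos_of_pos_of_lt_pi hx0 hxπ
  have hcos : 2 - 2 * cos (2 * x) = 4 * sin x ^ 2 := by rw [cos_two_mul, cos_sq']; ring
  rw [hcos]
  gcongr
  exact sin_le hx0.le

theorem sq_div_le_one_div_two_sub_two_cos {n j : ℕ} (hj : 1 ≤ j) (hjn : j < n) :
    (n : ℝ) ^ 2 / (4 * π ^ 2) * (1 / (j : ℝ) ^ 2) ≤ 1 / (2 - 2 * cos (2 * π * j / n)) := by
  have hj' : (1 : ℝ) ≤ j := by exact_mod_cast hj
  have hjn' : (j : ℝ) < n := by exact_mod_cast hjn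
  have hn : (0 : ℝ) < n := by linarith
  have h := one_div_four_mul_sq_le_one_div_two_sub_two_cos_two_mul (x := π * j / n)
    (by positivity) (by rw [div_lt_iff₀ hn]; nlinarith [pi_pos])
  rw [show 2 * π * j / n = 2 * (π * j / n) by ring]
  convert h using 2
  field_simp

theorem one_div_two_sub_two_cos_reflect {n j : ℕ} (hjn : j ≤ n) :
    1 / (2 - 2 * cos (2 * π * (n - j : ℕ) / n)) = 1 / (2 - 2 * cos (2 * π * j / n)) := by
  rcases Nat.eq_zero_or_pos n with rfl | hn
  · simp
  have hn : (n : ℝ) ≠ 0 := by positivity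
  rw [Nat.cast_sub hjn, mul_sub, sub_div, mul_div_assoc, div_self hn, mul_one, cos_two_pi_sub]

theorem sq_div_twelve_sub_div_six_le_sum_one_div_two_sub_two_cos {n : ℕ} (hn : 3 ≤ n) :
    (n : ℝ) ^ 2 / 12 - n / 6 ≤ ∑ j ∈ Ico 1 n, 1 / (2 - 2 * cos (2 * π * j / n)) := by
  set m := (n + 1) / 2
  set f : ℕ → ℝ := fun j => 1 / (2 - 2 * cos (2 * π * j / n))
  have hf : ∀ j, 0 ≤ f j := fun j =>
    one_div_nonneg.2 (by linarith [cos_le_one (2 * π * j / n)])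
  have hpair : 2 * ((n : ℝ) ^ 2 / (4 * π ^ 2)) * ∑ j ∈ Ico 1 m, (1 : ℝ) / (j : ℝ) ^ 2
      ≤ ∑ j ∈ Ico 1 n, f j := by
    refine le_trans ?_ (sum_Ico_add_reflect_le_sum_Ico hf (m := m) (by omega))
    rw [mul_assoc, mul_sum, two_mul, ← sum_add_distrib]
    refine sum_le_sum fun j hj => ?_
    obtain ⟨hj1, hjm⟩ := mem_Ico.1 hj
    have := sq_div_le_one_div_two_sub_two_cos (n := n) hj1 (by omega)
    simp only [f, one_div_two_sub_two_cos_reflect (n := n) (j := j) (by omega)]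
    linarith
  have hbasel := pi_sq_div_six_le_sum_Ico_one_div_sq_add (m := m) (by omega)
  have hn' : (3 : ℝ) ≤ n := by exact_mod_cast hn
  have hm : (n : ℝ) ≤ 2 * m := by exact_mod_cast (by omega : n ≤ 2 * m)
  have hpi : 9 < π ^ 2 := by nlinarith [pi_gt_three]
  -- the tail loss `n²/π² · 1/(2m - 1)` is at most `n/6` because `6n ≤ 9(n - 1) < π²(2m - 1)`
  have htail : (n : ℝ) ^ 2 / (2 * π ^ 2) * (2 / (2 * m - 1)) ≤ n / 6 := by
    have hpos : (0 : ℝ) < 2 * m - 1 := by linarith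
    have h6 : 6 * (n : ℝ) ≤ π ^ 2 * (2 * m - 1) := by nlinarith
    rw [div_mul_div_comm, div_le_div_iff₀ (by positivity) (by positivity)]
    nlinarith
  have hmain : (n : ℝ) ^ 2 / 12 - n ^ 2 / (2 * π ^ 2) * (2 / (2 * m - 1))
      ≤ 2 * ((n : ℝ) ^ 2 / (4 * π ^ 2)) * ∑ j ∈ Ico 1 m, (1 : ℝ) / (j : ℝ) ^ 2 := by
    have e : 2 * ((n : ℝ) ^ 2 / (4 * π ^ 2)) = n ^ 2 / (2 * π ^ 2) := by ring
    have e' : (n : ℝ) ^ 2 / 12 = n ^ 2 / (2 * π ^ 2) * (π ^ 2 / 6) := by field_simp; norm_num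
    rw [e, e', ← mul_sub]
    gcongr
    linarith
  linarith

theorem one_div_mul_sum_one_div_two_sub_two_cos_le_Rave2 {M1 : ℕ} (hM1 : 0 < M1) (M2 : ℕ) :
    1 / ((M1 : ℝ) * M2) * ∑ j ∈ Ico 1 M2, 1 / (2 - 2 * cos (2 * π * j / M2)) ≤ Rave2 M1 M2 := by
  rw [Rave2]
  gcongr
  set G : ℕ → ℕ → ℝ := fun i j => if i = 0 ∧ j = 0 then 0
    else 1 / (4 - 2 * cos (2 * π * i / M1) - 2 * cos (2 * π * j / M2))
  have hG : ∀ i j, 0 ≤ G i j := fun i j => by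
    simp only [G]
    split_ifs
    · rfl
    · exact one_div_nonneg.2 (by linarith [cos_le_one (2 * π * i / M1), cos_le_one (2 * π * j / M2)])
  have hrow : ∑ j ∈ Ico 1 M2, 1 / (2 - 2 * cos (2 * π * j / M2)) = ∑ j ∈ range M2, G 0 j := by
    rcases Nat.eq_zero_or_pos M2 with rfl | hM2
    · simp
    rw [sum_range_eq_add_Ico _ hM2]
    refine (zero_add _).symm.trans (congrArg₂ _ (by simp [G]) (sum_congr rfl fun j hj => ?_))
    simp only [G, if_neg (by simp only [mem_Ico] at hj; omega : ¬(0 = 0 ∧ j = 0))]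
    norm_num
  calc ∑ j ∈ Ico 1 M2, 1 / (2 - 2 * cos (2 * π * j / M2))
      = ∑ j ∈ range M2, G 0 j := hrow
    _ ≤ ∑ i ∈ range M1, ∑ j ∈ range M2, G i j :=
        single_le_sum (fun i _ => sum_nonneg fun j _ => hG i j) (mem_range.2 hM1)

theorem torus2_lower_one (M1 M2 : ℕ) (h1 : 4 ≤ M1) (h12 : M1 ≤ M2) :
    Rave2 M1 M2 ≥ (1 / 12) * ((M2 : ℝ) / M1) - 1 / 24 := by
  have hM1 : (4 : ℝ) ≤ M1 := by exact_mod_cast h1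
  have hM2 : (4 : ℝ) ≤ M2 := by exact_mod_cast h1.trans h12
  have hcycle := sq_div_twelve_sub_div_six_le_sum_one_div_two_sub_two_cos (n := M2) (by omega)
  have hloss : (1 : ℝ) / (6 * M1) ≤ 1 / 24 := by
    rw [div_le_div_iff₀ (by positivity) (by norm_num)]; linarith
  calc (1 / 12) * ((M2 : ℝ) / M1) - 1 / 24
      ≤ (1 / 12) * ((M2 : ℝ) / M1) - 1 / (6 * M1) := by linarith
    _ = 1 / ((M1 : ℝ) * M2) * ((M2 : ℝ) ^ 2 / 12 - M2 / 6) := by field_simp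
    _ ≤ 1 / ((M1 : ℝ) * M2) * ∑ j ∈ Ico 1 M2, 1 / (2 - 2 * cos (2 * π * j / M2)) := by
        gcongr
    _ ≤ Rave2 M1 M2 := one_div_mul_sum_one_div_two_sub_two_cos_le_Rave2 (by omega) M2
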